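/- Suppose a pushout diagram of systems of sets: D_t = B_t ⊔_{A_t} C_t for all t, naturally in t, where f : A → B is an r-bijection. Then the induced map f' : C → D is an r-bijection. -/

import Mathlib

open scoped NNReal

/-- A system of sets: a functor `[0,∞) → Set`, given by sets `X_s` and compatible
structure maps `σ : X_s → X_t` for `s ≤ t`. -/
structure SysSet where
  obj : ℝ≥0 → Type
  map : ∀ {s t : ℝ≥0}, s ≤ t → obj s → obj t
  map_id : ∀ (s : ℝ≥0) (x : obj s), map le_rfl x = x
  map_comp : ∀ {s t u : ℝ≥0} (h₁ : s ≤ t) (h₂ : t ≤ u) (x : obj s),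
    map h₂ (map h₁ x) = map (h₁.trans h₂) x

/-- A map of systems of sets: a natural transformation of functors. -/
structure SysSet.Hom (X Y : SysSet) where
  app : ∀ s, X.obj s → Y.obj s
  naturality : ∀ {s t : ℝ≥0} (h : s ≤ t) (x : X.obj s),
    app t (X.map h x) = Y.map h (app s x)

/-- Composition of maps of systems (`(f.comp g) = g ∘ f`). -/
def SysSet.Hom.comp {X Y Z : SysSet} (f : X.Hom Y) (g : Y.Hom Z) : X.Hom Z where
  app s x := g.app s (f.app s x)
  naturality h x := by simp only [f.naturality, g.naturality]

/-- `f` is an `r`-monomorphism: if `f(x) = f(y)` in `Y_s` then `σ(x) = σ(y)` in `X_{s+r}`. -/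
def SysSet.Hom.IsMono {X Y : SysSet} (r : ℝ≥0) (f : X.Hom Y) : Prop :=
  ∀ (s : ℝ≥0) (x y : X.obj s), f.app s x = f.app s y →
    X.map (le_self_add : s ≤ s + r) x = X.map le_self_add y

/-- `f` is an `r`-epimorphism: every `y ∈ Y_s` satisfies `σ(y) = f(x)` in `Y_{s+r}` for
some `x ∈ X_{s+r}`. -/
def SysSet.Hom.IsEpi {X Y : SysSet} (r : ℝ≥0) (f : X.Hom Y) : Prop :=
  ∀ (s : ℝ≥0) (y : Y.obj s), ∃ x : X.obj (s + r),
    f.app (s + r) x = Y.map (le_self_add : s ≤ s + r) y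

/-- `f` is an `r`-isomorphism if it is both an `r`-monomorphism and an `r`-epimorphism. -/
def SysSet.Hom.IsIso {X Y : SysSet} (r : ℝ≥0) (f : X.Hom Y) : Prop :=
  f.IsMono r ∧ f.IsEpi r

open CategoryTheory

universe u

namespace CategoryTheory.Limits.Types

variable {X₁ X₂ X₃ X₄ : Type u} {t : X₁ ⟶ X₂} {l : X₁ ⟶ X₃} {r : X₂ ⟶ X₄} {b : X₃ ⟶ X₄}

lemma eq_of_inr_eq_inr_of_isPushout (h : IsPushout t l r b) {Y : Type u} (g : X₃ → Y)
    (hg : ∀ x y, t x = t y → g (l x) = g (l y)) {x₃ y₃ : X₃} (he : b x₃ = b y₃) :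
    g x₃ = g y₃ := by
  -- Descend `x₃ ↦ {g x₃}` to `X₄`, sending `x₂` to the set of values `g (l x₁)` with `t x₁ = x₂`.
  let φ : X₂ ⟶ Set Y := TypeCat.ofHom fun x₂ => {y | ∃ x₁, t x₁ = x₂ ∧ g (l x₁) = y}
  let ψ : X₃ ⟶ Set Y := TypeCat.ofHom fun x₃ => {g x₃}
  have w : t ≫ φ = l ≫ ψ := by
    ext x y
    change (∃ x', t x' = t x ∧ g (l x') = y) ↔ y = g (l x)
    constructor
    · rintro ⟨x', hx', rfl⟩
      exact hg _ _ hx'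
    · rintro rfl
      exact ⟨x, rfl, rfl⟩
  have hdesc : ∀ x : X₃, h.desc φ ψ w (b x) = {g x} :=
    fun x => ConcreteCategory.congr_hom (h.inr_desc φ ψ w) x
  rw [← Set.singleton_eq_singleton_iff, ← hdesc, ← hdesc, he]

end CategoryTheory.Limits.Types

namespace SysSet

variable {A B C D : SysSet} {f : A.Hom B} {α : A.Hom C} {β : B.Hom D} {f' : C.Hom D} {r : ℝ≥0}

lemma Hom.IsMono.of_isPushout
    (hpo : ∀ t : ℝ≥0, IsPushout (C := Type)
      (TypeCat.ofHom (f.app t)) (TypeCat.ofHom (α.app t)) (TypeCat.ofHom (β.app t))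
      (TypeCat.ofHom (f'.app t)))
    (hf : f.IsMono r) : f'.IsMono r := fun t _ _ he =>
  Limits.Types.eq_of_inr_eq_inr_of_isPushout (hpo t) (C.map le_self_add)
    (fun x y hxy => by
      change C.map _ (α.app t x) = C.map _ (α.app t y)
      rw [← α.naturality, ← α.naturality, hf t x y hxy]) he

lemma Hom.IsEpi.of_isPushout
    (hpo : ∀ t : ℝ≥0, IsPushout (C := Type)
      (TypeCat.ofHom (f.app t)) (TypeCat.ofHom (α.app t)) (TypeCat.ofHom (β.app t))
      (TypeCat.ofHom (f'.app t)))
    (hf : f.IsEpi r) : f'.IsEpi r := by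
  intro t d
  obtain ⟨y, rfl⟩ | ⟨c, rfl⟩ := Limits.Types.eq_or_eq_of_isPushout (hpo t) d
  · obtain ⟨x, hx⟩ := hf t y
    refine ⟨α.app (t + r) x, ?_⟩
    have hcomm := ConcreteCategory.congr_hom (hpo (t + r)).w x
    change β.app (t + r) (f.app (t + r) x) = f'.app (t + r) (α.app (t + r) x) at hcomm
    change f'.app (t + r) (α.app (t + r) x) = D.map _ (β.app t y)
    rw [← hcomm, hx, β.naturality]
  · exact ⟨C.map le_self_add c, f'.naturality _ c⟩

end SysSet

/-- If `D` is the sectionwise pushout of `B ← A → C` in sets, natural in the parameter,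
and `f : A → B` is an `r`-bijection, then the induced map `f' : C → D` is an
`r`-bijection. -/
theorem stmt15 {A B C D : SysSet} (f : A.Hom B) (α : A.Hom C)
    (β : B.Hom D) (f' : C.Hom D)
    (hpo : ∀ t : ℝ≥0, CategoryTheory.IsPushout (C := Type)
      (TypeCat.ofHom (f.app t)) (TypeCat.ofHom (α.app t)) (TypeCat.ofHom (β.app t))
      (TypeCat.ofHom (f'.app t)))
    (r : ℝ≥0) (hf : f.IsIso r) : f'.IsIso r :=
  ⟨.of_isPushout hpo hf.1, .of_isPushout hpo hf.2⟩
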